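/- arXiv:1106.1703 — 4 statements merged into one kernel-verified Lean document; each statement's English description precedes it below -/
import Mathlib

section
/- The colored union graph of a structured switched linear system contains no S-dilation if and only if the concatenated structured pattern [A_1, A_2, …, A_m, B_1, B_2, …, B_m] has generic rank n. -/
/-- Edge relation of the graph `G_i` of subsystem `i`, on vertices `Fin r ⊕ Fin n`
(inputs on the left, states on the right). -/
def subEdge {m n r : ℕ}
    (PA : Fin m → Fin n → Fin n → Prop) (PB : Fin m → Fin n → Fin r → Prop)
    (i : Fin m) (v w : Fin r ⊕ Fin n) : Prop :=
  match v, w with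
  | Sum.inl j, Sum.inr k => PB i k j
  | Sum.inr l, Sum.inr k => PA i k l
  | _, _ => False

/-- Edge relation of the union graph `G`. -/
def unionEdge {m n r : ℕ}
    (PA : Fin m → Fin n → Fin n → Prop) (PB : Fin m → Fin n → Fin r → Prop)
    (v w : Fin r ⊕ Fin n) : Prop :=
  ∃ i, subEdge PA PB i v w

/-- A state vertex is accessible if some directed path in the union graph starting at an
input vertex reaches it. -/
def Accessible {m n r : ℕ}
    (PA : Fin m → Fin n → Fin n → Prop) (PB : Fin m → Fin n → Fin r → Prop)
    (k : Fin n) : Prop :=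
  ∃ j : Fin r, Relation.ReflTransGen (unionEdge PA PB) (Sum.inl j) (Sum.inr k)

/-- The colored union graph contains an `S`-dilation: a nonempty set `S` of state vertices
with `Σ_{i=1}^m |T_i(S)| < |S|`, where `T_i(S)` is the set of vertices with an edge into
some vertex of `S` in the subsystem graph `G_i`. -/
def HasSDilation {m n r : ℕ}
    (PA : Fin m → Fin n → Fin n → Prop) (PB : Fin m → Fin n → Fin r → Prop) : Prop :=
  ∃ S : Set (Fin n), S.Nonempty ∧
    (∑ i : Fin m,
      ({v : Fin r ⊕ Fin n | ∃ k ∈ S, subEdge PA PB i v (Sum.inr k)}).ncard) < S.ncard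

/-- The concatenated structured pattern `[A_1,…,A_m,B_1,…,B_m]`: an `n × m(n+r)` pattern
whose columns are all the columns of the `A_i` followed by all the columns of the `B_i`,
columns from different subsystems counted as distinct. -/
def concatPattern {m n r : ℕ}
    (PA : Fin m → Fin n → Fin n → Prop) (PB : Fin m → Fin n → Fin r → Prop)
    (k : Fin n) : (Fin m × Fin n) ⊕ (Fin m × Fin r) → Prop :=
  fun c => match c with
  | Sum.inl (i, l) => PA i k l
  | Sum.inr (i, j) => PB i k j

/-- The generic rank of a structured pattern: the maximal rank achieved by a realization,
i.e. by a real matrix vanishing at every fixed-zero position. -/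
noncomputable def gRank {n : ℕ} {α : Type} [Fintype α] (P : Fin n → α → Prop) : ℕ :=
  sSup {t : ℕ | ∃ M : Matrix (Fin n) α ℝ, (∀ k c, ¬ P k c → M k c = 0) ∧ M.rank = t}

open Matrix

/-- The number of elements of a subset of a sum type is the sum of the numbers of
elements of its two parts. -/
private lemma ncard_sum_split {α β : Type*} [Fintype α] [Fintype β] (p : α ⊕ β → Prop) :
    {x : α ⊕ β | p x}.ncard = {a : α | p (Sum.inl a)}.ncard + {b : β | p (Sum.inr b)}.ncard := by
  rw [← Nat.card_coe_set_eq, ← Nat.card_coe_set_eq, ← Nat.card_coe_set_eq]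
  exact (Nat.card_congr (Equiv.subtypeSum (p := fun x => x ∈ {x : α ⊕ β | p x}))).trans
    Nat.card_sum

/-- Counting a subset of a product type fiberwise. -/
private lemma ncard_prod_split {α β : Type*} [Fintype α] [Fintype β] (p : α × β → Prop) :
    {x : α × β | p x}.ncard = ∑ a : α, {b : β | p (a, b)}.ncard := by
  classical
  have e : ↑{x : α × β | p x} ≃ (Σ a : α, ↑{b : β | p (a, b)}) :=
    Equiv.subtypeProdEquivSigmaSubtype (fun a b => p (a, b))
  rw [← Nat.card_coe_set_eq, Nat.card_congr e, Nat.card_eq_fintype_card,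
    Fintype.card_sigma]
  refine Finset.sum_congr rfl fun a _ => ?_
  rw [← Nat.card_coe_set_eq, Nat.card_eq_fintype_card]

/-- `Σ_i |T_i(S)|` equals the number of columns of the concatenated pattern having a
free entry in some row of `S`. -/
private lemma key_card {m n r : ℕ} (PA : Fin m → Fin n → Fin n → Prop)
    (PB : Fin m → Fin n → Fin r → Prop) (S : Set (Fin n)) :
    (∑ i : Fin m,
        ({v : Fin r ⊕ Fin n | ∃ k ∈ S, subEdge PA PB i v (Sum.inr k)}).ncard)
      = ({c : (Fin m × Fin n) ⊕ (Fin m × Fin r) | ∃ k ∈ S, concatPattern PA PB k c}).ncard := by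
  have hT : ∀ i : Fin m,
      ({v : Fin r ⊕ Fin n | ∃ k ∈ S, subEdge PA PB i v (Sum.inr k)}).ncard
        = ({j : Fin r | ∃ k ∈ S, PB i k j}).ncard + ({l : Fin n | ∃ k ∈ S, PA i k l}).ncard := by
    intro i
    rw [ncard_sum_split (p := fun v => ∃ k ∈ S, subEdge PA PB i v (Sum.inr k))]
    simp [subEdge]
  rw [ncard_sum_split (p := fun c => ∃ k ∈ S, concatPattern PA PB k c),
    ncard_prod_split (p := fun a : Fin m × Fin n => ∃ k ∈ S, concatPattern PA PB k (Sum.inl a)),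
    ncard_prod_split (p := fun a : Fin m × Fin r => ∃ k ∈ S, concatPattern PA PB k (Sum.inr a))]
  simp only [hT, concatPattern]
  rw [Finset.sum_add_distrib, add_comm]

/-- A row-saturating matching in the pattern produces a full-rank realization. -/
private lemma rank_matching {n : ℕ} {α : Type} [Fintype α] [DecidableEq α] (f : Fin n → α)
    (hf : Function.Injective f) :
    (Matrix.of fun k c => if f k = c then (1:ℝ) else 0).rank = n := by
  set M : Matrix (Fin n) α ℝ := Matrix.of fun k c => if f k = c then (1:ℝ) else 0 with hM
  have hMT : M * Mᵀ = 1 := by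
    ext k k'
    simp [Matrix.mul_apply, Matrix.one_apply, M, ite_and, hf.eq_iff, eq_comm]
  have hsurj : Function.Surjective M.mulVecLin := by
    intro v
    refine ⟨Mᵀ.mulVec v, ?_⟩
    rw [Matrix.mulVecLin_apply, Matrix.mulVec_mulVec, hMT, Matrix.one_mulVec]
  rw [Matrix.rank, LinearMap.range_eq_top.2 hsurj, finrank_top]
  simp

/-- If more than `|C|` rows of a matrix are supported inside a column set `C`, the matrix
does not have full row rank. -/
private lemma rank_lt_of_confined {n : ℕ} {α : Type} [Fintype α]
    (M : Matrix (Fin n) α ℝ) (S : Finset (Fin n)) (C : Finset α)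
    (hsupp : ∀ k ∈ S, ∀ c, c ∉ C → M k c = 0) (hcard : C.card < S.card) :
    M.rank < n := by
  classical
  have hnotLI : ¬ LinearIndependent ℝ (fun k : ↥S => fun c : ↥C => M k c) := by
    intro hLI
    have := hLI.fintype_card_le_finrank
    rw [Module.finrank_pi ℝ] at this
    simp only [Fintype.card_coe] at this
    omega
  rw [Fintype.not_linearIndependent_iff] at hnotLI
  obtain ⟨w, hw0, k₀, hk₀⟩ := hnotLI
  set w' : Fin n → ℝ := fun k => if h : k ∈ S then w ⟨k, h⟩ else 0 with hw'
  have hker : Mᵀ.mulVec w' = 0 := by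
    funext c
    simp only [Pi.zero_apply]
    have hsum : Mᵀ.mulVec w' c = ∑ k ∈ S, M k c * w' k := by
      rw [Matrix.mulVec, dotProduct]
      refine (Finset.sum_subset (Finset.subset_univ S) ?_).symm
      intro k _ hk
      simp [w', hk]
    rw [hsum]
    by_cases hc : c ∈ C
    · have := congrFun hw0 ⟨c, hc⟩
      simp only [Finset.sum_apply, Pi.smul_apply, smul_eq_mul, Pi.zero_apply] at this
      rw [← this, ← Finset.sum_attach S (fun k => M k c * w' k)]
      refine Finset.sum_congr rfl fun k _ => ?_
      simp [w', k.2, mul_comm]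
    · refine Finset.sum_eq_zero fun k hk => ?_
      rw [hsupp k hk c hc, zero_mul]
  have hw'0 : w' ≠ 0 := by
    intro h
    apply hk₀
    have := congrFun h k₀
    simpa [w', k₀.2] using this
  have hrn := LinearMap.finrank_range_add_finrank_ker (Mᵀ.mulVecLin)
  have hkerpos : 0 < Module.finrank ℝ (LinearMap.ker Mᵀ.mulVecLin) := by
    rw [Module.finrank_pos_iff]
    refine nontrivial_of_ne ⟨w', ?_⟩ 0 ?_
    · rw [LinearMap.mem_ker, Matrix.mulVecLin_apply, hker]
    · simp [Submodule.mk_eq_zero, hw'0]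
  rw [Module.finrank_pi ℝ, Fintype.card_fin] at hrn
  have : Mᵀ.rank < n := by
    rw [Matrix.rank]
    omega
  rwa [Matrix.rank_transpose] at this

/-- The colored union graph contains no `S`-dilation iff the concatenated
structured pattern `[A_1,…,A_m,B_1,…,B_m]` has generic rank `n`. -/
theorem no_sDilation_iff_gRank_concatPattern
    {m n r : ℕ} (PA : Fin m → Fin n → Fin n → Prop) (PB : Fin m → Fin n → Fin r → Prop) :
    ¬ HasSDilation PA PB ↔ gRank (concatPattern PA PB) = n := by
  classical
  set R : Set ℕ := {t | ∃ M : Matrix (Fin n) ((Fin m × Fin n) ⊕ (Fin m × Fin r)) ℝ,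
      (∀ k c, ¬ concatPattern PA PB k c → M k c = 0) ∧ M.rank = t} with hRdef
  have hgR : gRank (concatPattern PA PB) = sSup R := rfl
  have hmemR : ∀ t ∈ R, t ≤ n := by
    rintro t ⟨M, -, rfl⟩
    exact M.rank_le_card_height.trans (le_of_eq (Fintype.card_fin n))
  have hR0 : (0:ℕ) ∈ R := ⟨0, fun _ _ _ => rfl, Matrix.rank_zero⟩
  have hbdd : BddAbove R := ⟨n, fun t ht => hmemR t ht⟩
  set t : Fin n → Finset ((Fin m × Fin n) ⊕ (Fin m × Fin r)) :=
    fun k => Finset.univ.filter (fun c => concatPattern PA PB k c) with htdef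
  have hNS : ∀ S : Finset (Fin n), (S.biUnion t).card
      = ({c : (Fin m × Fin n) ⊕ (Fin m × Fin r) |
            ∃ k ∈ (S : Set (Fin n)), concatPattern PA PB k c}).ncard := by
    intro S
    rw [← Set.ncard_coe_finset]
    congr 1
    ext c
    simp [t]
  constructor
  · intro hnd
    have hall : ∀ S : Finset (Fin n), S.card ≤ (S.biUnion t).card := by
      intro S
      rcases S.eq_empty_or_nonempty with rfl | hS
      · simp
      by_contra hcon
      push_neg at hcon
      refine hnd ⟨↑S, Finset.coe_nonempty.2 hS, ?_⟩
      rw [key_card PA PB (↑S : Set (Fin n)), ← hNS S, Set.ncard_coe_finset]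
      exact hcon
    obtain ⟨f, hfinj, hft⟩ := (Finset.all_card_le_biUnion_card_iff_exists_injective t).1 hall
    have hfP : ∀ k, concatPattern PA PB k (f k) := by
      intro k
      have := hft k
      simp only [t, Finset.mem_filter] at this
      exact this.2
    have hnR : n ∈ R := by
      refine ⟨Matrix.of fun k c => if f k = c then (1:ℝ) else 0, ?_, rank_matching f hfinj⟩
      intro k c hP
      simp only [Matrix.of_apply, ite_eq_right_iff]
      intro h
      exact absurd (h ▸ hfP k) hP
    rw [hgR]
    exact le_antisymm (csSup_le ⟨0, hR0⟩ hmemR) (le_csSup hbdd hnR)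
  · intro hg hdil
    obtain ⟨S, hSne, hlt⟩ := hdil
    have hnR : n ∈ R := by
      rw [hgR] at hg
      exact hg ▸ Nat.sSup_mem ⟨0, hR0⟩ hbdd
    obtain ⟨M, hM, hMr⟩ := hnR
    set SF := S.toFinset with hSF
    have hScoe : (SF : Set (Fin n)) = S := Set.coe_toFinset S
    have hcard : (SF.biUnion t).card < SF.card := by
      rw [hNS SF, hScoe, ← key_card PA PB S]
      calc (∑ i : Fin m,
            ({v : Fin r ⊕ Fin n | ∃ k ∈ S, subEdge PA PB i v (Sum.inr k)}).ncard)
          < S.ncard := hlt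
        _ = SF.card := Set.ncard_eq_toFinset_card' S
    have hrank : M.rank < n := by
      refine rank_lt_of_confined M SF (SF.biUnion t) ?_ hcard
      intro k hk c hc
      apply hM
      intro hP
      exact hc (Finset.mem_biUnion.2 ⟨k, hk, Finset.mem_filter.2 ⟨Finset.mem_univ _, hP⟩⟩)
    omega
end

section
/- There exist n S-disjoint edges in the colored union graph of a structured switched linear system if and only if the concatenated structured pattern [A_1, A_2, …, A_m, B_1, B_2, …, B_m] has generic rank n. -/
/-- There exist `k` `S`-disjoint (colored) edges in the colored union graph: edges
`e_t = (v t, v' t)` of the subsystem graphs `G_{c t}` with pairwise distinct end vertices,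
such that any two distinct edges with the same begin vertex carry distinct subsystem
indices. -/
def HasSDisjointEdges {m n r : ℕ}
    (PA : Fin m → Fin n → Fin n → Prop) (PB : Fin m → Fin n → Fin r → Prop)
    (k : ℕ) : Prop :=
  ∃ (v : Fin k → Fin r ⊕ Fin n) (v' : Fin k → Fin n) (c : Fin k → Fin m),
    (∀ t, subEdge PA PB (c t) (v t) (Sum.inr (v' t))) ∧
    Function.Injective v' ∧
    (∀ s t, s ≠ t → v s = v t → c s ≠ c t)

/-!
A pattern has generic rank `n` (full row rank) exactly when it admits a row matching: an
injective choice of a free column in every row. A realization of rank `n` has a nonzero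
`n × n` minor, and a nonzero term of its Leibniz expansion is such a matching; conversely the
`0/1` realization supported on a matching consists of distinct unit rows. Column `(i, v)` of
row `k` of `[A_1,…,A_m,B_1,…,B_m]` is free iff `v → x_k` is an edge of `G_i`, so a row
matching is the same as a family of `n` edges of distinct colored begin vertices `(i, v)`
ending at every state once, i.e. of `n` `S`-disjoint edges.
-/

open Function

def IsRealization {ι α K : Type*} [Zero K] (P : ι → α → Prop) (M : Matrix ι α K) : Prop :=
  ∀ i c, ¬ P i c → M i c = 0

def HasRowMatching {ι α : Type*} (P : ι → α → Prop) : Prop :=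
  ∃ φ : ι ↪ α, ∀ i, P i (φ i)

theorem hasRowMatching_congr_equiv {ι α β : Type*} {P : ι → α → Prop} {Q : ι → β → Prop}
    (e : β ≃ α) (h : ∀ i b, Q i b ↔ P i (e b)) : HasRowMatching Q ↔ HasRowMatching P :=
  ⟨fun ⟨φ, hφ⟩ => ⟨φ.trans e.toEmbedding, fun i => (h i (φ i)).1 (hφ i)⟩,
    fun ⟨φ, hφ⟩ => ⟨φ.trans e.symm.toEmbedding, fun i => (h i _).2 (by simpa using hφ i)⟩⟩

namespace Matrix

theorem exists_perm_forall_ne_zero_of_det_ne_zero {ι R : Type*} [Fintype ι] [DecidableEq ι]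
    [CommRing R] {A : Matrix ι ι R} (hA : A.det ≠ 0) : ∃ σ : Equiv.Perm ι, ∀ i, A (σ i) i ≠ 0 := by
  rw [det_apply] at hA
  obtain ⟨σ, -, hσ⟩ := Finset.exists_ne_zero_of_sum_ne_zero hA
  have hprod : ∏ i, A (σ i) i ≠ 0 := fun h => hσ (by rw [h, smul_zero])
  exact ⟨σ, fun i h => hprod (Finset.prod_eq_zero (Finset.mem_univ i) h)⟩

variable {ι α K : Type*} [Fintype ι] [Fintype α] [Field K]

theorem exists_injective_det_submatrix_ne_zero [DecidableEq ι] {M : Matrix ι α K}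
    (hM : M.rank = Fintype.card ι) : ∃ e : ι → α, Injective e ∧ (M.submatrix id e).det ≠ 0 := by
  obtain ⟨κ, a, ha, hspan, hli⟩ := exists_linearIndependent' K M.col
  have : Fintype κ := Fintype.ofInjective a ha
  have hcard : Fintype.card ι = Fintype.card κ := by
    rw [← hM, rank_eq_finrank_span_cols, ← hspan, linearIndependent_iff_card_eq_finrank_span.mp hli]
    rfl
  let f : ι ≃ κ := Fintype.equivOfCardEq hcard
  refine ⟨a ∘ f, ha.comp f.injective, ?_⟩
  have hcols : LinearIndependent K (M.submatrix id (a ∘ f)).col := hli.comp f f.injective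
  exact (isUnit_iff_isUnit_det _).mp (linearIndependent_cols_iff_isUnit.mp hcols) |>.ne_zero

theorem exists_embedding_ne_zero_of_rank_eq_card {M : Matrix ι α K}
    (hM : M.rank = Fintype.card ι) : ∃ φ : ι ↪ α, ∀ i, M i (φ i) ≠ 0 := by
  classical
  obtain ⟨e, he, hdet⟩ := exists_injective_det_submatrix_ne_zero hM
  obtain ⟨σ, hσ⟩ := exists_perm_forall_ne_zero_of_det_ne_zero hdet
  exact ⟨⟨e ∘ σ.symm, he.comp σ.symm.injective⟩, fun i => by simpa using hσ (σ.symm i)⟩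

theorem rank_submatrix_one_of_injective [DecidableEq α] {φ : ι → α} (hφ : Injective φ) :
    ((1 : Matrix α α K).submatrix φ id).rank = Fintype.card ι :=
  LinearIndependent.rank_matrix <| by
    convert (Pi.linearIndependent_single_one α K).comp φ hφ
    ext i c
    exact one_eq_pi_single

end Matrix

theorem hasRowMatching_iff_exists_isRealization_rank_eq_card {ι α : Type*} [Fintype ι]
    [Fintype α] (K : Type*) [Field K] (P : ι → α → Prop) :
    HasRowMatching P ↔ ∃ M : Matrix ι α K, IsRealization P M ∧ M.rank = Fintype.card ι := by
  classical
  constructor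
  · rintro ⟨φ, hφ⟩
    refine ⟨(1 : Matrix α α K).submatrix φ id, fun i c hc => ?_,
      Matrix.rank_submatrix_one_of_injective φ.injective⟩
    show (1 : Matrix α α K) (φ i) c = 0
    exact Matrix.one_apply_ne fun h => hc (h ▸ hφ i)
  · rintro ⟨M, hMP, hM⟩
    obtain ⟨φ, hφ⟩ := Matrix.exists_embedding_ne_zero_of_rank_eq_card hM
    exact ⟨φ, fun i => Not.imp_symm (hMP i (φ i)) (hφ i)⟩

theorem gRank_eq_iff_exists_isRealization_rank_eq {n : ℕ} {α : Type} [Fintype α]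
    (P : Fin n → α → Prop) :
    gRank P = n ↔ ∃ M : Matrix (Fin n) α ℝ, IsRealization P M ∧ M.rank = n := by
  let S := {t : ℕ | ∃ M : Matrix (Fin n) α ℝ, IsRealization P M ∧ M.rank = t}
  change sSup S = n ↔ n ∈ S
  have hle : ∀ t ∈ S, t ≤ n := by
    rintro t ⟨M, -, rfl⟩
    exact M.rank_le_card_height.trans_eq (Fintype.card_fin n)
  refine ⟨fun h => ?_, fun hn => IsGreatest.csSup_eq ⟨hn, hle⟩⟩
  have h0 : 0 ∈ S := ⟨0, fun _ _ _ => rfl, Matrix.rank_zero⟩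
  rw [← h]
  exact Nat.sSup_mem ⟨0, h0⟩ ⟨n, hle⟩

theorem gRank_eq_iff_hasRowMatching {n : ℕ} {α : Type} [Fintype α] (P : Fin n → α → Prop) :
    gRank P = n ↔ HasRowMatching P := by
  rw [gRank_eq_iff_exists_isRealization_rank_eq,
    hasRowMatching_iff_exists_isRealization_rank_eq_card ℝ, Fintype.card_fin]

section SwitchedSystem

variable {m n r : ℕ} (PA : Fin m → Fin n → Fin n → Prop) (PB : Fin m → Fin n → Fin r → Prop)

def coloredEdgeEquivColumn : Fin m × (Fin r ⊕ Fin n) ≃ (Fin m × Fin n) ⊕ (Fin m × Fin r) :=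
  (Equiv.prodSumDistrib _ _ _).trans (Equiv.sumComm _ _)

theorem concatPattern_coloredEdgeEquivColumn (k : Fin n) (p : Fin m × (Fin r ⊕ Fin n)) :
    concatPattern PA PB k (coloredEdgeEquivColumn p) ↔ subEdge PA PB p.1 p.2 (Sum.inr k) := by
  obtain ⟨i, j | l⟩ := p <;> rfl

theorem hasSDisjointEdges_iff_hasRowMatching :
    HasSDisjointEdges PA PB n ↔
      HasRowMatching fun k (p : Fin m × (Fin r ⊕ Fin n)) => subEdge PA PB p.1 p.2 (Sum.inr k) := by
  constructor
  · rintro ⟨v, v', c, hedge, hv', hcol⟩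
    let e : Fin n ≃ Fin n := Equiv.ofBijective v' (Finite.injective_iff_bijective.mp hv')
    have hinj : Injective fun t => (c t, v t) := fun s t hst => by
      by_contra hne
      exact hcol s t hne (congrArg Prod.snd hst) (congrArg Prod.fst hst)
    refine ⟨⟨_, hinj.comp e.symm.injective⟩, fun k => ?_⟩
    have hedge_k := hedge (e.symm k)
    rwa [show v' (e.symm k) = k from e.apply_symm_apply k] at hedge_k
  · rintro ⟨φ, hφ⟩
    refine ⟨fun k => (φ k).2, id, fun k => (φ k).1, hφ, injective_id, fun s t hne hv hc => ?_⟩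
    exact hne (φ.injective (Prod.ext hc hv))

end SwitchedSystem

/-- There exist `n` `S`-disjoint edges in the colored union graph iff the
concatenated structured pattern `[A_1,…,A_m,B_1,…,B_m]` has generic rank `n`. -/
theorem sDisjointEdges_iff_gRank_concatPattern
    {m n r : ℕ} (PA : Fin m → Fin n → Fin n → Prop) (PB : Fin m → Fin n → Fin r → Prop) :
    HasSDisjointEdges PA PB n ↔ gRank (concatPattern PA PB) = n := by
  rw [gRank_eq_iff_hasRowMatching, hasSDisjointEdges_iff_hasRowMatching]
  exact hasRowMatching_congr_equiv coloredEdgeEquivColumn fun k p =>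
    (concatPattern_coloredEdgeEquivColumn PA PB k p).symm
end

section
/- There exist n S-disjoint edges in the colored union graph of a structured switched linear system if and only if the colored union graph contains no S-dilation. -/
/-! An `S`-disjoint family of `n` edges is the same as an injective choice, for every state
`k`, of a colored in-edge `(color, begin vertex)` of `k`, i.e. a matching of the states into
`Fin m × (U ∪ X)`. By Hall's theorem such a matching exists iff every set `S` of states has at
least `|S|` colored in-neighbours, and counting these color by color gives `Σ_i |T_i(S)|`. -/

theorem Set.ncard_setOf_prod_eq_sum {α β : Type*} [Fintype α] [Finite β] (p : α → β → Prop) :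
    {x : α × β | p x.1 x.2}.ncard = ∑ a, {b | p a b}.ncard := by
  classical
  have := Fintype.ofFinite β
  simp only [Set.ncard_eq_toFinset_card', Set.toFinset_ofPred, Finset.card_filter,
    Fintype.sum_prod_type]

theorem exists_injective_iff_forall_ncard_le {α β : Type*} [Finite α] [Finite β]
    (r : α → β → Prop) :
    (∃ f : α → β, Function.Injective f ∧ ∀ x, r x (f x)) ↔
      ∀ S : Set α, S.ncard ≤ {b | ∃ a ∈ S, r a b}.ncard := by
  classical
  have := Fintype.ofFinite β
  have ncard_image (A : Finset α) :
      {b | ∃ a ∈ (A : Set α), r a b}.ncard = Finset.card {b | ∃ a ∈ A, r a b} := by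
    rw [Set.ncard_eq_toFinset_card']
    simp
  rw [← Fintype.all_card_le_filter_rel_iff_exists_injective]
  refine ⟨fun h S => ?_, fun h A => ?_⟩
  · obtain ⟨A, rfl⟩ := S.toFinite.exists_finset_coe
    rw [Set.ncard_coe_finset, ncard_image]
    exact h A
  · rw [← Set.ncard_coe_finset, ← ncard_image]
    exact h A

section

variable {m n r : ℕ} (PA : Fin m → Fin n → Fin n → Prop) (PB : Fin m → Fin n → Fin r → Prop)

theorem hasSDisjointEdges_iff_exists_injective :
    HasSDisjointEdges PA PB n ↔
      ∃ f : Fin n → Fin m × (Fin r ⊕ Fin n), Function.Injective f ∧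
        ∀ k, subEdge PA PB (f k).1 (f k).2 (Sum.inr k) := by
  constructor
  · rintro ⟨v, v', c, hedge, hv', hcolor⟩
    let σ := Equiv.ofBijective v' (Finite.injective_iff_bijective.mp hv')
    refine ⟨fun k => (c (σ.symm k), v (σ.symm k)), fun k l hkl => ?_, fun k => ?_⟩
    · by_contra hne
      exact hcolor _ _ (σ.symm.injective.ne hne) (congrArg Prod.snd hkl) (congrArg Prod.fst hkl)
    · simpa only [σ, Equiv.ofBijective_apply_symm_apply] using hedge (σ.symm k)
  · rintro ⟨f, hf, hedge⟩
    exact ⟨fun k => (f k).2, id, fun k => (f k).1, hedge, Function.injective_id,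
      fun s t hst hv hc => hst (hf (Prod.ext hc hv))⟩

theorem not_hasSDilation_iff :
    ¬ HasSDilation PA PB ↔ ∀ S : Set (Fin n),
      S.ncard ≤ ∑ i, {v | ∃ k ∈ S, subEdge PA PB i v (Sum.inr k)}.ncard := by
  simp only [HasSDilation, not_exists, not_and, not_lt]
  refine ⟨fun h S => ?_, fun h S _ => h S⟩
  rcases S.eq_empty_or_nonempty with rfl | hS
  · simp
  · exact h S hS

end

/-- There exist `n` `S`-disjoint edges in the colored union graph iff the
colored union graph contains no `S`-dilation. -/
theorem sDisjointEdges_iff_no_sDilation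
    {m n r : ℕ} (PA : Fin m → Fin n → Fin n → Prop) (PB : Fin m → Fin n → Fin r → Prop) :
    HasSDisjointEdges PA PB n ↔ ¬ HasSDilation PA PB := by
  rw [hasSDisjointEdges_iff_exists_injective, not_hasSDilation_iff,
    exists_injective_iff_forall_ncard_le fun k (p : Fin m × (Fin r ⊕ Fin n)) =>
      subEdge PA PB p.1 p.2 (Sum.inr k)]
  simp only [← Set.ncard_setOf_prod_eq_sum]
end

section
/- If the structured pattern pair (A, B) of a linear system is reducible (of form I), then for every realization (Ã, B̃) there is a state index k (depending only on the pattern, not on the realization) such that row k of the controllability matrix [B̃, ÃB̃, …, Ã^{n−1}B̃] is identically zero; in particular (A,B) is not structurally controllable. -/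
/-- A realization of the structured linear pattern pair `(PA, PB)`: matrices vanishing at
every fixed-zero (non-free-parameter) position. -/
def IsLinRealization {n r : ℕ}
    (PA : Fin n → Fin n → Prop) (PB : Fin n → Fin r → Prop)
    (A : Matrix (Fin n) (Fin n) ℝ) (B : Matrix (Fin n) (Fin r) ℝ) : Prop :=
  (∀ k l, ¬ PA k l → A k l = 0) ∧ (∀ k j, ¬ PB k j → B k j = 0)

/-- The controllability matrix `[B, AB, …, A^{n−1}B]` of a linear pair `(A, B)`. -/
noncomputable def ctrbMatrix {n r : ℕ} (A : Matrix (Fin n) (Fin n) ℝ)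
    (B : Matrix (Fin n) (Fin r) ℝ) : Matrix (Fin n) (Fin n × Fin r) ℝ :=
  fun k p => ((A ^ (p.1 : ℕ)) * B) k p.2

/-- Structural controllability of the structured linear pattern pair `(PA, PB)`: some
realization has controllability matrix of full row rank `n`. -/
def LinStructurallyControllable {n r : ℕ}
    (PA : Fin n → Fin n → Prop) (PB : Fin n → Fin r → Prop) : Prop :=
  ∃ A B, IsLinRealization PA PB A B ∧ (ctrbMatrix A B).rank = n

/-- A structured pattern pair `(PA, PB)` is reducible (of form I): there is a nonempty set
`S` of row indices such that `PA k l` is a fixed zero for all `k ∈ S`, `l ∉ S`, and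
`PB k j` is a fixed zero for all `k ∈ S` and all `j`. -/
def FormI {n r : ℕ} (PA : Fin n → Fin n → Prop) (PB : Fin n → Fin r → Prop) : Prop :=
  ∃ S : Set (Fin n), S.Nonempty ∧
    (∀ k ∈ S, ∀ l ∉ S, ¬ PA k l) ∧ (∀ k ∈ S, ∀ j, ¬ PB k j)

lemma rank_lt_of_zero_row {n : ℕ} {m : Type*} [Fintype m] (M : Matrix (Fin n) m ℝ) (k : Fin n)
    (hk : ∀ c, M k c = 0) : M.rank < n := by
  have hle : LinearMap.range M.mulVecLin ≤ LinearMap.ker (LinearMap.proj (R := ℝ) (φ := fun _ : Fin n => ℝ) k) := by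
    rintro x ⟨v, rfl⟩
    simp [Matrix.mulVecLin, Matrix.mulVec, dotProduct, hk]
  have h1 : M.rank ≤ Module.finrank ℝ (LinearMap.ker (LinearMap.proj (R := ℝ) (φ := fun _ : Fin n => ℝ) k)) :=
    Submodule.finrank_mono hle
  have hsur : Function.Surjective (LinearMap.proj (R := ℝ) (φ := fun _ : Fin n => ℝ) k) := by
    intro y; exact ⟨fun _ => y, rfl⟩
  have h2 := (LinearMap.proj (R := ℝ) (φ := fun _ : Fin n => ℝ) k).finrank_range_add_finrank_ker
  rw [LinearMap.range_eq_top.2 hsur, finrank_top] at h2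
  simp [Module.finrank_self] at h2
  have : Module.finrank ℝ (Fin n → ℝ) = n := by simp
  omega

/-- If the structured pattern pair `(A, B)` is reducible (of form I),
then there is a state index `k`, depending only on the pattern, such that for every
realization the `k`-th row of the controllability matrix `[B̃, ÃB̃, …, Ã^{n−1}B̃]` is
identically zero; in particular `(A, B)` is not structurally controllable. -/
theorem formI_implies_zero_row_of_ctrbMatrix
    {n r : ℕ} (PA : Fin n → Fin n → Prop) (PB : Fin n → Fin r → Prop)
    (h : FormI PA PB) :
    (∃ k : Fin n, ∀ (A : Matrix (Fin n) (Fin n) ℝ) (B : Matrix (Fin n) (Fin r) ℝ),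
        IsLinRealization PA PB A B → ∀ c, ctrbMatrix A B k c = 0) ∧
      ¬ LinStructurallyControllable PA PB := by
  obtain ⟨S, ⟨k0, hk0⟩, hSA, hSB⟩ := h
  have key : ∀ (A : Matrix (Fin n) (Fin n) ℝ) (B : Matrix (Fin n) (Fin r) ℝ),
      IsLinRealization PA PB A B → ∀ (m : ℕ) (k : Fin n), k ∈ S → ∀ j,
        ((A ^ m) * B) k j = 0 := by
    intro A B ⟨hA, hB⟩ m
    induction m with
    | zero => intro k hk j; simpa using hB k j (hSB k hk j)
    | succ m ih =>
      intro k hk j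
      have : (A ^ (m + 1)) * B = A * ((A ^ m) * B) := by
        rw [pow_succ', Matrix.mul_assoc]
      rw [this, Matrix.mul_apply]
      refine Finset.sum_eq_zero fun l _ => ?_
      by_cases hl : l ∈ S
      · rw [ih l hl j, mul_zero]
      · rw [hA k l (hSA k hk l hl), zero_mul]
  constructor
  · refine ⟨k0, fun A B hR c => ?_⟩
    exact key A B hR c.1 k0 hk0 c.2
  · rintro ⟨A, B, hR, hrank⟩
    have := rank_lt_of_zero_row (ctrbMatrix A B) k0
      (fun c => key A B hR c.1 k0 hk0 c.2)
    omega
end
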